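/- Let n be a positive integer, let 0 < p ≤ 1, let W ⊆ {1,…,n} satisfy p·|W| ≥ 200·log n, and let d be an integer with 1 ≤ d ≤ p·|W|/(240·log(np)). Then with probability 1 − o(n^{−2}) (uniformly over all such p, W and d), in the random graph G = G(n,p) every subset U ⊆ V(G) with |U| ≤ |W|/(4d) satisfies |N(U, W)| ≥ d·|U|. -/

import Mathlib

set_option maxHeartbeats 1000000

open MeasureTheory

/-- The Bernoulli measure on `Bool` with parameter `p`. -/
noncomputable def bern (p : ℝ) : Measure Bool :=
  (ENNReal.ofReal p) • Measure.dirac true + (ENNReal.ofReal (1 - p)) • Measure.dirac false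

instance bern.instIsFiniteMeasure (p : ℝ) : IsFiniteMeasure (bern p) := by
  constructor
  simp only [bern, Measure.coe_add, Pi.add_apply, Measure.coe_smul, Pi.smul_apply,
    smul_eq_mul, measure_univ, mul_one]
  exact ENNReal.add_lt_top.2 ⟨ENNReal.ofReal_lt_top, ENNReal.ofReal_lt_top⟩

/-- The distribution of the binomial random graph `G(n,p)`. -/
noncomputable def gnp (n : ℕ) (p : ℝ) :
    Measure ({e : Sym2 (Fin n) // ¬ e.IsDiag} → Bool) :=
  Measure.pi fun _ => bern p

/-- The graph on `Fin n` determined by a sample point. -/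
def graphOf {n : ℕ} (ω : {e : Sym2 (Fin n) // ¬ e.IsDiag} → Bool) : SimpleGraph (Fin n) :=
  SimpleGraph.fromEdgeSet {e | ∃ h : ¬ e.IsDiag, ω ⟨e, h⟩ = true}

/-- The exterior neighbourhood `N(U)` of a vertex set `U`. -/
def extNbhd {V : Type*} (G : SimpleGraph V) (U : Set V) : Set V :=
  {v | v ∉ U ∧ ∃ u ∈ U, G.Adj u v}

open Finset

abbrev EdgeT (n : ℕ) := {e : Sym2 (Fin n) // ¬ e.IsDiag}

lemma bern_true (p : ℝ) : bern p {true} = ENNReal.ofReal p := by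
  simp [bern, Measure.dirac_apply]

lemma bern_false (p : ℝ) : bern p {false} = ENNReal.ofReal (1-p) := by
  simp [bern, Measure.dirac_apply]

lemma bern_univ (p : ℝ) (h0 : 0 ≤ p) (h1 : p ≤ 1) : bern p Set.univ = 1 := by
  simp only [bern, Measure.coe_add, Pi.add_apply, Measure.coe_smul, Pi.smul_apply,
    smul_eq_mul, measure_univ, mul_one]
  rw [← ENNReal.ofReal_add h0 (by linarith)]; norm_num

def cylSet {n : ℕ} (A B : Finset (EdgeT n)) : Set (EdgeT n → Bool) :=
  {ω | (∀ e ∈ A, ω e = true) ∧ (∀ e ∈ B, ω e = false)}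

lemma gnp_cylSet {n : ℕ} {p : ℝ} (h0 : 0 ≤ p) (h1 : p ≤ 1) {A B : Finset (EdgeT n)}
    (hAB : Disjoint A B) :
    gnp n p (cylSet A B) ≤ ENNReal.ofReal (p ^ A.card * (1-p) ^ B.card) := by
  classical
  have hpi : cylSet A B = Set.pi Set.univ
      (fun e => if e ∈ A then {true} else if e ∈ B then ({false} : Set Bool) else Set.univ) := by
    ext ω
    simp only [cylSet, Set.mem_setOf_eq, Set.mem_pi, Set.mem_univ, forall_true_left]
    constructor
    · rintro ⟨hA, hB⟩ e
      by_cases heA : e ∈ A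
      · simp [heA, hA e heA]
      · by_cases heB : e ∈ B
        · simp [heA, heB, hB e heB]
        · simp [heA, heB]
    · intro h
      constructor
      · intro e he; have := h e; simpa [he] using this
      · intro e he
        have heA : e ∉ A := fun hh => (Finset.disjoint_left.1 hAB) hh he
        have := h e; simpa [he, heA] using this
  rw [hpi, gnp, Measure.pi_pi]
  have hprod : ∀ e : EdgeT n, bern p (if e ∈ A then {true} else if e ∈ B then ({false} : Set Bool) else Set.univ)
      = if e ∈ A then ENNReal.ofReal p else if e ∈ B then ENNReal.ofReal (1-p) else 1 := by
    intro e
    by_cases heA : e ∈ A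
    · simp [heA, bern_true]
    · by_cases heB : e ∈ B
      · simp [heA, heB, bern_false]
      · simp only [if_neg heA, if_neg heB]; exact bern_univ p h0 h1
  rw [Finset.prod_congr rfl (fun e _ => hprod e)]
  rw [← Finset.prod_mul_prod_compl (A ∪ B)]
  have h2 : ∏ e ∈ (A ∪ B)ᶜ, (if e ∈ A then ENNReal.ofReal p else if e ∈ B then ENNReal.ofReal (1-p) else 1) = 1 := by
    apply Finset.prod_eq_one
    intro e he
    simp only [Finset.mem_compl, Finset.mem_union, not_or] at he
    simp [he.1, he.2]
  rw [h2, mul_one, Finset.prod_union hAB]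
  have hA' : ∏ e ∈ A, (if e ∈ A then ENNReal.ofReal p else if e ∈ B then ENNReal.ofReal (1-p) else 1) = (ENNReal.ofReal p) ^ A.card := by
    rw [← Finset.prod_const]
    exact Finset.prod_congr rfl fun e he => by simp [he]
  have hB' : ∏ e ∈ B, (if e ∈ A then ENNReal.ofReal p else if e ∈ B then ENNReal.ofReal (1-p) else 1) = (ENNReal.ofReal (1-p)) ^ B.card := by
    rw [← Finset.prod_const]
    refine Finset.prod_congr rfl fun e he => ?_
    have heA : e ∉ A := fun hh => (Finset.disjoint_left.1 hAB) hh he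
    simp [he, heA]
  rw [hA', hB', ENNReal.ofReal_mul (by positivity), ENNReal.ofReal_pow h0, ENNReal.ofReal_pow (by linarith)]

def edf {n : ℕ} (q : Fin n × Fin n) : Finset (EdgeT n) :=
  Finset.univ.filter (fun e => (e : Sym2 (Fin n)) = s(q.1, q.2))

lemma mem_edf {n : ℕ} {q : Fin n × Fin n} {e : EdgeT n} :
    e ∈ edf q ↔ (e : Sym2 (Fin n)) = s(q.1, q.2) := by
  simp [edf]

lemma card_edf {n : ℕ} {q : Fin n × Fin n} (h : q.1 ≠ q.2) : (edf q).card = 1 := by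
  have hd : ¬ (s(q.1, q.2) : Sym2 (Fin n)).IsDiag := by
    rw [Sym2.mk_isDiag_iff]; exact h
  rw [Finset.card_eq_one]
  exact ⟨⟨s(q.1,q.2), hd⟩, by ext e; simp [mem_edf, Subtype.ext_iff]⟩

lemma card_biUnion_edf {n : ℕ} {U : Finset (Fin n)} {Q : Finset (Fin n × Fin n)}
    (hQ : ∀ q ∈ Q, q.1 ∉ U ∧ q.2 ∈ U) : (Q.biUnion edf).card = Q.card := by
  classical
  rw [Finset.card_biUnion]
  · rw [Finset.sum_congr rfl (fun q hq => card_edf (fun h => (hQ q hq).1 (h ▸ (hQ q hq).2)))]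
    simp
  · intro q hq q' hq' hne
    rw [Function.onFun, Finset.disjoint_left]
    intro e he he'
    rw [mem_edf] at he he'
    rw [he] at he'
    rw [Sym2.eq_iff] at he'
    rcases he' with ⟨h1, h2⟩ | ⟨h1, h2⟩
    · exact hne (Prod.ext h1 h2)
    · exact (hQ q hq).1 (h1 ▸ (hQ q' hq').2)

def condI {n : ℕ} (W : Set (Fin n)) (d : ℕ) (i : Finset (Fin n) × Finset (Fin n × Fin n)) : Prop :=
  i.1.Nonempty ∧ ((i.1.card : ℝ) ≤ (W.ncard : ℝ) / (4 * d)) ∧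
    i.2 ⊆ (W.toFinite.toFinset \ i.1) ×ˢ i.1 ∧ i.2.card < d * i.1.card

open Classical in
noncomputable def AI {n : ℕ} (W : Set (Fin n)) (d : ℕ)
    (i : Finset (Fin n) × Finset (Fin n × Fin n)) : Set (EdgeT n → Bool) :=
  if condI W d i then
    cylSet (i.2.biUnion edf)
      ((((W.toFinite.toFinset \ i.1) \ i.2.image Prod.fst) ×ˢ i.1).biUnion edf)
  else ∅

lemma bad_subset {n : ℕ} (W : Set (Fin n)) (d : ℕ) :
    {ω : EdgeT n → Bool | ¬ ∀ U : Set (Fin n), (U.ncard : ℝ) ≤ W.ncard / (4 * d) →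
        d * U.ncard ≤ (extNbhd (graphOf ω) U ∩ W).ncard}
      ⊆ ⋃ i : Finset (Fin n) × Finset (Fin n × Fin n), AI W d i := by
  classical
  intro ω hω
  simp only [Set.mem_setOf_eq] at hω
  push_neg at hω
  obtain ⟨U₀, hU₀card, hU₀bad⟩ := hω
  set G := graphOf ω with hG
  set S₀ : Set (Fin n) := extNbhd G U₀ ∩ W with hS₀
  have hU₀ne : U₀.Nonempty := by
    by_contra h
    rw [Set.not_nonempty_iff_eq_empty] at h
    simp [h] at hU₀bad
  set U : Finset (Fin n) := U₀.toFinite.toFinset with hU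
  set Sf : Finset (Fin n) := S₀.toFinite.toFinset with hSf
  have hUcard : U₀.ncard = U.card := Set.ncard_eq_toFinset_card U₀ U₀.toFinite
  have hScard : S₀.ncard = Sf.card := Set.ncard_eq_toFinset_card S₀ S₀.toFinite
  set c : Fin n → Fin n := fun w => if h : ∃ u ∈ U₀, G.Adj u w then h.choose else w with hc
  have hcspec : ∀ w ∈ S₀, c w ∈ U₀ ∧ G.Adj (c w) w := by
    intro w hw
    have hex : ∃ u ∈ U₀, G.Adj u w := hw.1.2
    rw [hc]; simp only [dif_pos hex]
    exact hex.choose_spec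
  set P : Finset (Fin n × Fin n) := Sf.image (fun w => (w, c w)) with hP
  have hPcard : P.card = Sf.card :=
    Finset.card_image_of_injOn (fun w _ w' _ h => congrArg Prod.fst h)
  have hPfst : P.image Prod.fst = Sf := by
    ext x
    simp [hP]
  have hScond : ∀ w ∈ Sf, w ∈ W.toFinite.toFinset ∧ w ∉ U := by
    intro w hw
    rw [hSf, Set.Finite.mem_toFinset] at hw
    exact ⟨(Set.Finite.mem_toFinset _).2 hw.2, fun hh => hw.1.1 ((Set.Finite.mem_toFinset _).1 hh)⟩
  have hcond : condI W d (U, P) := by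
    refine ⟨(Set.Finite.toFinset_nonempty _).2 hU₀ne, ?_, ?_, ?_⟩
    · rw [← hUcard]; exact hU₀card
    · intro q hq
      rw [hP, Finset.mem_image] at hq
      obtain ⟨w, hw, rfl⟩ := hq
      rw [Finset.mem_product]
      refine ⟨Finset.mem_sdiff.2 ⟨(hScond w hw).1, (hScond w hw).2⟩, ?_⟩
      rw [hU, Set.Finite.mem_toFinset]
      exact (hcspec w ((Set.Finite.mem_toFinset _).1 hw)).1
    · rw [hPcard, ← hScard, ← hUcard]; exact hU₀bad
  rw [Set.mem_iUnion]
  refine ⟨(U, P), ?_⟩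
  rw [AI, if_pos hcond]
  constructor
  · -- true edges
    intro e he
    rw [Finset.mem_biUnion] at he
    obtain ⟨q, hq, he⟩ := he
    rw [hP, Finset.mem_image] at hq
    obtain ⟨w, hw, rfl⟩ := hq
    rw [mem_edf] at he
    have hadj : G.Adj (c w) w := (hcspec w ((Set.Finite.mem_toFinset _).1 hw)).2
    rw [hG, graphOf, SimpleGraph.fromEdgeSet_adj] at hadj
    obtain ⟨⟨hdg, htr⟩, hne⟩ := hadj
    have : e = ⟨s(c w, w), hdg⟩ := Subtype.ext (by rw [he]; exact Sym2.eq_swap)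
    rw [this]; exact htr
  · -- false edges
    intro e he
    rw [Finset.mem_biUnion] at he
    obtain ⟨q, hq, he⟩ := he
    rw [Finset.mem_product] at hq
    obtain ⟨hq1, hq2⟩ := hq
    rw [mem_edf] at he
    by_contra hfalse
    have htrue : ω e = true := by
      cases hh : ω e
      · exact absurd hh hfalse
      · rfl
    rw [Finset.mem_sdiff] at hq1
    obtain ⟨hq1', hq1S⟩ := hq1
    rw [Finset.mem_sdiff, Set.Finite.mem_toFinset] at hq1'
    have hvU : q.2 ∈ U₀ := by
      have := hq2; rw [hU, Set.Finite.mem_toFinset] at this; exact this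
    have hwnU : q.1 ∉ U₀ := fun hh => hq1'.2 ((Set.Finite.mem_toFinset _).2 hh)
    have hadj : G.Adj q.2 q.1 := by
      rw [hG, graphOf, SimpleGraph.fromEdgeSet_adj]
      have hval : (e : Sym2 (Fin n)) = s(q.2, q.1) := by rw [he]; exact Sym2.eq_swap
      refine ⟨⟨hval ▸ e.2, ?_⟩, fun hh => hwnU (hh ▸ hvU)⟩
      · have : e = ⟨s(q.2, q.1), hval ▸ e.2⟩ := Subtype.ext hval
        rw [← this]; exact htrue
    have hwS : q.1 ∈ S₀ := ⟨⟨hwnU, ⟨q.2, hvU, hadj⟩⟩, hq1'.1⟩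
    exact hq1S (hPfst ▸ ((Set.Finite.mem_toFinset _).2 hwS))

open Classical in
noncomputable def gI {n : ℕ} (W : Set (Fin n)) (p : ℝ) (d : ℕ)
    (i : Finset (Fin n) × Finset (Fin n × Fin n)) : ℝ :=
  if condI W d i then
    p ^ i.2.card * (1-p) ^ (i.1.card * ((W.toFinite.toFinset \ i.1).card - i.2.card))
  else 0

lemma AI_measure {n : ℕ} {p : ℝ} (h0 : 0 ≤ p) (h1 : p ≤ 1) (W : Set (Fin n)) (d : ℕ)
    (i : Finset (Fin n) × Finset (Fin n × Fin n)) :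
    gnp n p (AI W d i) ≤ ENNReal.ofReal (gI W p d i) := by
  classical
  rw [AI, gI]
  by_cases hc : condI W d i
  · rw [if_pos hc, if_pos hc]
    obtain ⟨U, P⟩ := i
    obtain ⟨hne, hcard, hPsub, hPcard⟩ := hc
    set Wf := W.toFinite.toFinset with hWf
    set SP := P.image Prod.fst with hSP
    have hmemP : ∀ q ∈ P, q.1 ∉ U ∧ q.2 ∈ U := by
      intro q hq
      have := hPsub hq
      rw [Finset.mem_product, Finset.mem_sdiff] at this
      exact ⟨this.1.2, this.2⟩
    have hmemB : ∀ q ∈ ((Wf \ U) \ SP) ×ˢ U, q.1 ∉ U ∧ q.2 ∈ U := by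
      intro q hq
      rw [Finset.mem_product, Finset.mem_sdiff, Finset.mem_sdiff] at hq
      exact ⟨hq.1.1.2, hq.2⟩
    have hdisj : Disjoint (P.biUnion edf) ((((Wf \ U) \ SP) ×ˢ U).biUnion edf) := by
      rw [Finset.disjoint_left]
      intro e he he'
      rw [Finset.mem_biUnion] at he he'
      obtain ⟨q, hq, he⟩ := he
      obtain ⟨q', hq', he'⟩ := he'
      rw [mem_edf] at he he'
      rw [he] at he'
      rw [Sym2.eq_iff] at he'
      have h1' := hmemP q hq
      have h2' := hmemB q' hq'
      rw [Finset.mem_product, Finset.mem_sdiff, Finset.mem_sdiff] at hq'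
      rcases he' with ⟨ha, hb⟩ | ⟨ha, hb⟩
      · -- q.1 = q'.1 : but q.1 ∈ SP, q'.1 ∉ SP
        apply hq'.1.2
        rw [← ha, hSP]
        exact Finset.mem_image_of_mem Prod.fst hq
      · exact h1'.1 (ha ▸ h2'.2)
    refine le_trans (gnp_cylSet h0 h1 hdisj) ?_
    apply ENNReal.ofReal_le_ofReal
    rw [card_biUnion_edf hmemP, card_biUnion_edf hmemB, Finset.card_product]
    apply mul_le_mul_of_nonneg_left _ (by positivity)
    apply pow_le_pow_of_le_one (by linarith) (by linarith)
    have h1 : (Wf \ U).card - P.card ≤ ((Wf \ U) \ SP).card := by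
      refine le_trans ?_ (Finset.le_card_sdiff SP _)
      exact Nat.sub_le_sub_left (Finset.card_image_le) _
    calc U.card * ((Wf \ U).card - P.card) ≤ U.card * ((Wf \ U) \ SP).card :=
          Nat.mul_le_mul_left _ h1
      _ = ((Wf \ U) \ SP).card * U.card := Nat.mul_comm _ _
  · rw [if_neg hc, if_neg hc]
    simp

lemma pow_div_factorial_le_exp {x : ℝ} (hx : 0 ≤ x) (j : ℕ) :
    x ^ j / j.factorial ≤ Real.exp x := by
  refine le_trans ?_ (Real.sum_le_exp_of_nonneg hx (j+1))
  refine Finset.single_le_sum (f := fun i => x ^ i / i.factorial) ?_ (Finset.self_mem_range_succ j)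
  intro i _
  positivity

lemma mono_xlog {x y A : ℝ} (hx : 1 ≤ x) (hxy : x ≤ y) (hyA : y ≤ A) :
    x * (1 + Real.log A - Real.log x) ≤ y * (1 + Real.log A - Real.log y) := by
  have hx0 : (0:ℝ) < x := by linarith
  have hy0 : (0:ℝ) < y := by linarith
  have h1 : Real.log (y / x) ≤ y / x - 1 := Real.log_le_sub_one_of_pos (by positivity)
  rw [Real.log_div (ne_of_gt hy0) (ne_of_gt hx0)] at h1
  have h2 : x * (Real.log y - Real.log x) ≤ y - x := by
    have := mul_le_mul_of_nonneg_left h1 (le_of_lt hx0)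
    calc x * (Real.log y - Real.log x) ≤ x * (y / x - 1) := this
      _ = y - x := by field_simp
  have h3 : Real.log y ≤ Real.log A := Real.log_le_log hy0 hyA
  nlinarith [h2, h3, sub_nonneg.2 hxy]

lemma term_bound {p L B : ℝ} {m M u d j : ℕ}
    (hp0 : 0 < p) (hp1 : p ≤ 1) (hL : 1 ≤ L) (hB : (100:ℝ) ≤ B)
    (hdB : 240 * d * B ≤ p * M) (hlog : Real.log ((m:ℝ) * p / d) ≤ B)
    (hAL : 200 * L ≤ p * M) (hd1 : 1 ≤ d) (hu1 : 1 ≤ u)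
    (h4du : 4 * d * u ≤ M) (hm : M ≤ m + u) (hj : j < d * u) :
    (Nat.choose (m*u) j : ℝ) * p ^ j * (1-p) ^ (u*(m-j)) ≤ Real.exp (-(66:ℝ)*u*L)
    := by
  have hd1' : (1:ℝ) ≤ d := by exact_mod_cast hd1
  have hu1' : (1:ℝ) ≤ u := by exact_mod_cast hu1
  have h4du' : 4 * (d:ℝ) * u ≤ M := by exact_mod_cast h4du
  have hm' : (M:ℝ) ≤ m + u := by exact_mod_cast hm
  set A : ℝ := p * M with hA
  have hApos : (0:ℝ) < A := lt_of_lt_of_le (by linarith) hAL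
  have hM4 : (4:ℝ) ≤ M := by nlinarith
  have hdA : (d:ℝ) ≤ A / 24000 := by nlinarith
  have hduM : 4 * ((d:ℝ)*u) ≤ M := by nlinarith
  have hj' : (j:ℝ) < (d:ℝ) * u := by exact_mod_cast hj
  have hjM : (j:ℝ) + u ≤ M / 2 := by nlinarith
  have hmj2 : (m:ℝ) - j ≥ M / 2 := by linarith
  have hjm : j ≤ m := by
    have : (j:ℝ) ≤ m := by linarith
    exact_mod_cast this
  have hmjcast : ((m - j : ℕ) : ℝ) = (m:ℝ) - j := by
    rw [Nat.cast_sub hjm]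
  have hp1' : (0:ℝ) ≤ 1 - p := by linarith
  -- Step 3 : second factor
  have step3 : (1-p) ^ (u*(m-j)) ≤ Real.exp (-(u * A / 2)) := by
    have h1p : 1 - p ≤ Real.exp (-p) := by
      have := Real.add_one_le_exp (-p); linarith
    calc (1-p) ^ (u*(m-j)) ≤ (Real.exp (-p)) ^ (u*(m-j)) :=
          pow_le_pow_left₀ hp1' h1p _
      _ = Real.exp (((u*(m-j) : ℕ):ℝ) * (-p)) := by rw [Real.exp_nat_mul]
      _ ≤ Real.exp (-(u * A / 2)) := by
          apply Real.exp_le_exp.2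
          have hcast : ((u*(m-j) : ℕ) : ℝ) = (u:ℝ) * ((m:ℝ) - j) := by
            push_cast [Nat.cast_sub hjm]; ring
          rw [hcast, hA]
          have h5 : (u:ℝ) * ((M:ℝ)/2) * p ≤ (u:ℝ) * ((m:ℝ)-j) * p :=
            mul_le_mul_of_nonneg_right (mul_le_mul_of_nonneg_left hmj2 (by positivity))
              (le_of_lt hp0)
          nlinarith [h5]
  -- Step 4 : first factor
  have step4 : (Nat.choose (m*u) j : ℝ) * p ^ j ≤ Real.exp (u * A / 120) := by
    rcases Nat.eq_zero_or_pos j with hj0 | hjpos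
    · subst hj0
      simp only [Nat.choose_zero_right, Nat.cast_one, pow_zero, mul_one]
      exact Real.one_le_exp (by positivity)
    · have hj1' : (1:ℝ) ≤ j := by exact_mod_cast hjpos
      have hm1 : (1:ℝ) ≤ m := by nlinarith
      set A' : ℝ := (m:ℝ) * u * p with hA'
      have hA'pos : 0 < A' := by positivity
      have hA'ge : u * A / 2 ≤ A' := by rw [hA', hA]; nlinarith
      have hduA' : (d:ℝ) * u ≤ A' := by nlinarith
      have hchoose : (Nat.choose (m*u) j : ℝ) ≤ ((m*u : ℕ):ℝ) ^ j / j.factorial :=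
        Nat.choose_le_pow_div j (m*u)
      have hcp : (Nat.choose (m*u) j : ℝ) * p ^ j ≤ A' ^ j / j.factorial := by
        calc (Nat.choose (m*u) j : ℝ) * p ^ j ≤ (((m*u : ℕ):ℝ) ^ j / j.factorial) * p ^ j :=
              mul_le_mul_of_nonneg_right hchoose (by positivity)
          _ = A' ^ j / j.factorial := by
              rw [hA']; push_cast; rw [div_mul_eq_mul_div, ← mul_pow]
      have hsplit : A' ^ j / j.factorial ≤ (A'/j) ^ j * Real.exp j := by
        have hjj : ((j:ℝ)) ^ j / j.factorial ≤ Real.exp j :=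
          pow_div_factorial_le_exp (by positivity) j
        have hfac : (0:ℝ) < j.factorial := by exact_mod_cast j.factorial_pos
        calc A' ^ j / j.factorial = (A'/j) ^ j * ((j:ℝ) ^ j / j.factorial) := by
              rw [div_pow]; field_simp
          _ ≤ (A'/j) ^ j * Real.exp j := by
              apply mul_le_mul_of_nonneg_left hjj (by positivity)
      have hexp : (A'/j) ^ j * Real.exp j = Real.exp ((j:ℝ) * (1 + Real.log A' - Real.log j)) := by
        rw [show (A'/j:ℝ)^j = Real.exp ((j:ℝ) * Real.log (A'/j)) by
              rw [Real.exp_nat_mul, Real.exp_log (by positivity)]]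
        rw [← Real.exp_add, Real.log_div (ne_of_gt hA'pos) (by positivity)]
        ring_nf
      have hmono : (j:ℝ) * (1 + Real.log A' - Real.log j) ≤
          ((d:ℝ)*u) * (1 + Real.log A' - Real.log ((d:ℝ)*u)) :=
        mono_xlog hj1' (le_of_lt hj') hduA'
      have hfin : ((d:ℝ)*u) * (1 + Real.log A' - Real.log ((d:ℝ)*u)) ≤ u * A / 120 := by
        have hlogeq : Real.log A' - Real.log ((d:ℝ)*u) = Real.log ((m:ℝ) * p / d) := by
          rw [← Real.log_div (ne_of_gt hA'pos) (by positivity)]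
          congr 1
          field_simp
          ring
        have h1B : 1 + Real.log ((m:ℝ)*p/d) ≤ 2*B := by linarith
        have hstep : ((d:ℝ)*u) * (1 + Real.log A' - Real.log ((d:ℝ)*u)) ≤ ((d:ℝ)*u) * (2*B) := by
          rw [show (1:ℝ) + Real.log A' - Real.log ((d:ℝ)*u)
              = 1 + (Real.log A' - Real.log ((d:ℝ)*u)) by ring, hlogeq]
          exact mul_le_mul_of_nonneg_left h1B (by positivity)
        have h2 : (u:ℝ) * (240 * d * B) ≤ u * A :=
          mul_le_mul_of_nonneg_left hdB (by positivity)
        nlinarith [hstep, h2]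
      calc (Nat.choose (m*u) j : ℝ) * p ^ j ≤ A' ^ j / j.factorial := hcp
        _ ≤ (A'/j) ^ j * Real.exp j := hsplit
        _ = Real.exp ((j:ℝ) * (1 + Real.log A' - Real.log j)) := hexp
        _ ≤ Real.exp (((d:ℝ)*u) * (1 + Real.log A' - Real.log ((d:ℝ)*u))) :=
            Real.exp_le_exp.2 hmono
        _ ≤ Real.exp (u * A / 120) := Real.exp_le_exp.2 hfin
  -- combine
  calc (Nat.choose (m*u) j : ℝ) * p ^ j * (1-p) ^ (u*(m-j))
      ≤ Real.exp (u * A / 120) * Real.exp (-(u * A / 2)) := by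
        apply mul_le_mul step4 step3 (by positivity) (le_of_lt (Real.exp_pos _))
    _ = Real.exp (u * A / 120 - u * A / 2) := by rw [← Real.exp_add]; ring_nf
    _ ≤ Real.exp (-(66:ℝ)*u*L) := by
        apply Real.exp_le_exp.2
        have : (u:ℝ) * (200 * L) ≤ u * A := mul_le_mul_of_nonneg_left hAL (by positivity)
        nlinarith [this]


lemma gI_nonneg {n : ℕ} (W : Set (Fin n)) {p : ℝ} (h0 : 0 ≤ p) (h1 : p ≤ 1) (d : ℕ)
    (i : Finset (Fin n) × Finset (Fin n × Fin n)) : 0 ≤ gI W p d i := by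
  rw [gI]; split
  · have : (0:ℝ) ≤ 1 - p := by linarith
    positivity
  · exact le_refl _
  
/-- Let `W ⊆ [n]` satisfy `p·|W| ≥ 200·log n`, and let `1 ≤ d ≤ p·|W|/(240·log(np))`.
Then with probability `1 − o(n^{−2})` (uniformly over all such `p`, `W` and `d`), in
`G = G(n,p)` every `U ⊆ V(G)` with `|U| ≤ |W|/(4d)` satisfies `|N(U, W)| ≥ d·|U|`. -/
theorem statement_14 :
    ∀ ε : ℝ, 0 < ε → ∃ N : ℕ, ∀ n : ℕ, N ≤ n → 0 < n → ∀ p : ℝ, 0 < p → p ≤ 1 →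
      ∀ W : Set (Fin n), 200 * Real.log n ≤ p * W.ncard →
      ∀ d : ℕ, 1 ≤ d → (d : ℝ) ≤ p * W.ncard / (240 * Real.log (n * p)) →
      gnp n p
        {ω | ¬ ∀ U : Set (Fin n), (U.ncard : ℝ) ≤ W.ncard / (4 * d) →
          d * U.ncard ≤ (extNbhd (graphOf ω) U ∩ W).ncard}
        ≤ ENNReal.ofReal (ε / n ^ 2) := by
  classical
  intro ε hε
  refine ⟨⌈Real.exp (Real.exp 100 / 200)⌉₊ + ⌈1/ε⌉₊ + 3, ?_⟩
  intro n hn hn0 p hp0 hp1 W hW d hd1 hd2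
  set L := Real.log n with hLdef
  set M₀ := W.ncard with hM₀
  have hn3 : (3:ℝ) ≤ n := by
    have : 3 ≤ n := le_trans (by omega) hn
    exact_mod_cast this
  have hnpos : (0:ℝ) < n := by linarith
  have hL1 : 1 ≤ L := by
    rw [hLdef, Real.le_log_iff_exp_le hnpos]
    calc Real.exp 1 ≤ 2.7182818286 := le_of_lt Real.exp_one_lt_d9
      _ ≤ n := by linarith
  have hLbig : Real.exp 100 / 200 ≤ L := by
    rw [hLdef, Real.le_log_iff_exp_le hnpos]
    calc Real.exp (Real.exp 100 / 200) ≤ (⌈Real.exp (Real.exp 100 / 200)⌉₊ : ℝ) :=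
          Nat.le_ceil _
      _ ≤ n := by
          have : (⌈Real.exp (Real.exp 100 / 200)⌉₊ : ℕ) ≤ n := le_trans (by omega) hn
          exact_mod_cast this
  have hεn : 1/ε ≤ n := by
    calc (1/ε : ℝ) ≤ (⌈1/ε⌉₊ : ℝ) := Nat.le_ceil _
      _ ≤ n := by
          have : (⌈1/ε⌉₊ : ℕ) ≤ n := le_trans (by omega) hn
          exact_mod_cast this
  have hM₀n : (M₀:ℝ) ≤ n := by
    have h1 : M₀ ≤ n := by
      rw [hM₀]
      calc W.ncard ≤ (Set.univ : Set (Fin n)).ncard :=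
            Set.ncard_le_ncard (Set.subset_univ W) (Set.toFinite _)
        _ = n := by rw [Set.ncard_univ, Nat.card_eq_fintype_card, Fintype.card_fin]
    exact_mod_cast h1
  have hA : 200 * L ≤ p * M₀ := hW
  have hApos : 0 < p * M₀ := lt_of_lt_of_le (by linarith) hA
  have hnp_pos : (0:ℝ) < n * p := by positivity
  have hpM_np : p * M₀ ≤ n * p := by nlinarith
  have hexp100 : Real.exp 100 ≤ n * p := by
    calc Real.exp 100 = 200 * (Real.exp 100 / 200) := by ring
      _ ≤ 200 * L := by linarith
      _ ≤ p * M₀ := hA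
      _ ≤ n * p := hpM_np
  set B := Real.log (n * p) with hBdef
  have hB : (100:ℝ) ≤ B := by
    rw [hBdef, Real.le_log_iff_exp_le hnp_pos]; exact hexp100
  have hd2' : 240 * (d:ℝ) * B ≤ p * M₀ := by
    have h240 : (0:ℝ) < 240 * B := by linarith
    have := (le_div_iff₀ h240).1 hd2
    linarith [this]
  have hdn : (d:ℝ) ≤ n := by nlinarith
  have hWfcard : (W.toFinite.toFinset).card = M₀ := by
    rw [hM₀, Set.ncard_eq_toFinset_card W W.toFinite]
  -- measure chain
  refine le_trans (measure_mono (bad_subset W d)) ?_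
  refine le_trans (measure_iUnion_le _) ?_
  rw [tsum_fintype]
  refine le_trans (Finset.sum_le_sum (fun i _ => AI_measure (le_of_lt hp0) hp1 W d i)) ?_
  rw [← ENNReal.ofReal_sum_of_nonneg (fun i _ => gI_nonneg W (le_of_lt hp0) hp1 d i)]
  apply ENNReal.ofReal_le_ofReal
  have h1p0 : (0:ℝ) ≤ 1 - p := by linarith
  -- inner bound per U
  have inner_bound : ∀ U : Finset (Fin n),
      (∑ P : Finset (Fin n × Fin n), gI W p d (U, P))
        ≤ (d * U.card : ℝ) * Real.exp (-(66:ℝ)*U.card*L) := by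
    intro U
    by_cases hUc : U.Nonempty ∧ ((U.card : ℝ) ≤ (M₀:ℝ) / (4*d))
    · obtain ⟨hUne, hUcard⟩ := hUc
      set u := U.card with hu
      set m := (W.toFinite.toFinset \ U).card with hm'
      have hu1 : 1 ≤ u := Finset.card_pos.2 hUne
      have h4du : 4 * d * u ≤ M₀ := by
        have h4d : (0:ℝ) < 4 * d := by
          have : (1:ℝ) ≤ d := by exact_mod_cast hd1
          linarith
        have := (le_div_iff₀ h4d).1 hUcard
        have hcast : ((4 * d * u : ℕ) : ℝ) ≤ (M₀ : ℝ) := by push_cast; nlinarith [this]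
        exact_mod_cast hcast
      have hm : M₀ ≤ m + u := by
        rw [← hWfcard]; exact Finset.card_le_card_sdiff_add_card
      have hdu1 : u ≤ d * u := Nat.le_mul_of_pos_left u (by omega)
      have hm1 : 1 ≤ m := by
        have h4 : 4 * (d*u) ≤ m + u := by rw [← Nat.mul_assoc]; exact le_trans h4du hm
        have : 1 ≤ d * u := by
          calc 1 ≤ u := hu1
            _ ≤ d * u := hdu1
        omega
      have hlog : Real.log ((m:ℝ) * p / d) ≤ B := by
        rw [hBdef]
        apply Real.log_le_log
        · have hm1' : (1:ℝ) ≤ m := by exact_mod_cast hm1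
          have hd1' : (1:ℝ) ≤ d := by exact_mod_cast hd1
          positivity
        · have hmn : (m:ℝ) ≤ n := by
            have h1 : m ≤ M₀ := by
              rw [← hWfcard]; exact Finset.card_le_card (Finset.sdiff_subset)
            have h2 : (m:ℝ) ≤ M₀ := by exact_mod_cast h1
            linarith
          have hd1' : (1:ℝ) ≤ d := by exact_mod_cast hd1
          have hmp0 : (0:ℝ) ≤ (m:ℝ) * p := by positivity
          calc (m:ℝ) * p / d ≤ (m:ℝ) * p := by
                apply div_le_self hmp0 hd1'
            _ ≤ n * p := by nlinarith
      -- the sum over P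
      set Q := ((W.toFinite.toFinset \ U) ×ˢ U).powerset.filter
        (fun P => P.card < d * u) with hQ
      have hzero : ∀ P ∉ Q, gI W p d (U, P) = 0 := by
        intro P hP
        rw [gI, if_neg]
        rintro ⟨-, -, h3, h4⟩
        exact hP (Finset.mem_filter.2 ⟨Finset.mem_powerset.2 h3, h4⟩)
      have hsubQ : ∑ P : Finset (Fin n × Fin n), gI W p d (U, P) = ∑ P ∈ Q, gI W p d (U, P) :=
        (Finset.sum_subset (Finset.subset_univ Q) (fun P _ hP => hzero P hP)).symm
      have hgle : ∀ P ∈ Q, gI W p d (U, P) ≤ p ^ P.card * (1-p) ^ (u * (m - P.card)) := by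
        intro P _
        rw [gI]
        split
        · exact le_refl _
        · positivity
      have hmaps : ∀ P ∈ Q, P.card ∈ Finset.range (d * u) := by
        intro P hP
        exact Finset.mem_range.2 (Finset.mem_filter.1 hP).2
      have hfiber : ∀ j ∈ Finset.range (d * u),
          (∑ P ∈ Q.filter (fun P => P.card = j), (p ^ P.card * (1-p) ^ (u * (m - P.card))))
            ≤ (Nat.choose (m * u) j : ℝ) * (p ^ j * (1-p) ^ (u * (m - j))) := by
        intro j _
        have hconst : ∀ P ∈ Q.filter (fun P => P.card = j),
            p ^ P.card * (1-p) ^ (u * (m - P.card)) = p ^ j * (1-p) ^ (u * (m - j)) := by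
          intro P hP
          rw [(Finset.mem_filter.1 hP).2]
        rw [Finset.sum_congr rfl hconst, Finset.sum_const, nsmul_eq_mul]
        apply mul_le_mul_of_nonneg_right _ (by positivity)
        have hsub : Q.filter (fun P => P.card = j) ⊆
            ((W.toFinite.toFinset \ U) ×ˢ U).powersetCard j := by
          intro P hP
          obtain ⟨hP1, hP2⟩ := Finset.mem_filter.1 hP
          obtain ⟨hP3, -⟩ := Finset.mem_filter.1 hP1
          rw [Finset.powersetCard_eq_filter]
          exact Finset.mem_filter.2 ⟨hP3, hP2⟩
        have := Finset.card_le_card hsub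
        rw [Finset.card_powersetCard, Finset.card_product] at this
        exact_mod_cast this
      calc ∑ P : Finset (Fin n × Fin n), gI W p d (U, P)
          = ∑ P ∈ Q, gI W p d (U, P) := hsubQ
        _ ≤ ∑ P ∈ Q, (p ^ P.card * (1-p) ^ (u * (m - P.card))) := Finset.sum_le_sum hgle
        _ = ∑ j ∈ Finset.range (d * u), ∑ P ∈ Q.filter (fun P => P.card = j),
              (p ^ P.card * (1-p) ^ (u * (m - P.card))) :=
            (Finset.sum_fiberwise_of_maps_to hmaps _).symm
        _ ≤ ∑ j ∈ Finset.range (d * u), (Nat.choose (m * u) j : ℝ) * (p ^ j * (1-p) ^ (u * (m - j))) :=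
            Finset.sum_le_sum hfiber
        _ ≤ ∑ j ∈ Finset.range (d * u), Real.exp (-(66:ℝ)*u*L) := by
            apply Finset.sum_le_sum
            intro j hj
            rw [← mul_assoc]
            exact term_bound hp0 hp1 hL1 hB hd2' hlog hA hd1 hu1 h4du hm (Finset.mem_range.1 hj)
        _ = (d * u : ℝ) * Real.exp (-(66:ℝ)*u*L) := by
            rw [Finset.sum_const, Finset.card_range, nsmul_eq_mul]
            push_cast; ring
    · have hzero : ∀ P : Finset (Fin n × Fin n), gI W p d (U, P) = 0 := by
        intro P
        rw [gI, if_neg]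
        rintro ⟨h1, h2, -, -⟩
        exact hUc ⟨h1, h2⟩
      rw [Finset.sum_congr rfl (fun P _ => hzero P), Finset.sum_const]
      simp only [smul_zero]
      positivity
  have hnexp : (n:ℝ) = Real.exp L := (Real.exp_log hnpos).symm
  -- outer sum
  have houter : ∀ u ∈ Finset.range (n+1),
      ((Finset.univ.filter (fun U : Finset (Fin n) => U.card = u)).card : ℝ)
        * ((d:ℝ) * (u:ℝ) * Real.exp (-(66:ℝ)*u*L)) ≤ (if u = 0 then 0 else Real.exp (-(63:ℝ)*L)) := by
    intro u hu
    rcases Nat.eq_zero_or_pos u with h0 | hpos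
    · subst h0; simp
    · rw [if_neg (by omega)]
      have hcount : (Finset.univ.filter (fun U : Finset (Fin n) => U.card = u)).card = n.choose u := by
        rw [← Finset.powerset_univ, ← Finset.powersetCard_eq_filter, Finset.card_powersetCard,
          Finset.card_univ, Fintype.card_fin]
      have hu1' : (1:ℝ) ≤ u := by exact_mod_cast hpos
      have hun' : (u:ℝ) ≤ n := by
        have : u ≤ n := Nat.lt_succ_iff.1 (Finset.mem_range.1 hu)
        exact_mod_cast this
      have hC : ((Finset.univ.filter (fun U : Finset (Fin n) => U.card = u)).card : ℝ) ≤ (n:ℝ)^u := by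
        rw [hcount]
        exact_mod_cast Nat.choose_le_pow n u
      have hpow : ((n:ℝ))^u = Real.exp (u * L) := by
        rw [hnexp, ← Real.exp_nat_mul]
      have h1 : ((Finset.univ.filter (fun U : Finset (Fin n) => U.card = u)).card : ℝ)
          * ((d:ℝ) * (u:ℝ) * Real.exp (-(66:ℝ)*u*L))
          ≤ Real.exp (u*L) * ((n:ℝ)*(n:ℝ) * Real.exp (-(66:ℝ)*u*L)) := by
        have e1 : ((Finset.univ.filter (fun U : Finset (Fin n) => U.card = u)).card : ℝ)
            ≤ Real.exp (u*L) := le_trans hC (le_of_eq hpow)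
        have e2 : (d:ℝ)*u ≤ (n:ℝ)*n := by nlinarith
        have e3 : (d:ℝ)*u*Real.exp (-(66:ℝ)*u*L) ≤ (n:ℝ)*(n:ℝ)*Real.exp (-(66:ℝ)*u*L) :=
          mul_le_mul_of_nonneg_right e2 (le_of_lt (Real.exp_pos _))
        have e4 : (0:ℝ) ≤ (d:ℝ)*u*Real.exp (-(66:ℝ)*u*L) := by positivity
        exact mul_le_mul e1 e3 e4 (by positivity)
      have h2 : Real.exp ((u:ℝ)*L) * ((n:ℝ)*(n:ℝ) * Real.exp (-(66:ℝ)*(u:ℝ)*L))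
          = Real.exp ((u:ℝ)*L + (L + L + -(66:ℝ)*(u:ℝ)*L)) := by
        rw [hnexp, ← Real.exp_add, ← Real.exp_add, ← Real.exp_add]
      have h3 : Real.exp ((u:ℝ)*L + (L + L + -(66:ℝ)*(u:ℝ)*L)) ≤ Real.exp (-(63:ℝ)*L) := by
        apply Real.exp_le_exp.2
        nlinarith [mul_le_mul_of_nonneg_right hu1' (le_trans zero_le_one hL1)]
      calc ((Finset.univ.filter (fun U : Finset (Fin n) => U.card = u)).card : ℝ)
          * ((d:ℝ) * (u:ℝ) * Real.exp (-(66:ℝ)*u*L))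
          ≤ Real.exp (u*L) * ((n:ℝ)*(n:ℝ) * Real.exp (-(66:ℝ)*u*L)) := h1
        _ = Real.exp ((u:ℝ)*L + (L + L + -(66:ℝ)*(u:ℝ)*L)) := h2
        _ ≤ Real.exp (-(63:ℝ)*L) := h3
  calc (∑ i : Finset (Fin n) × Finset (Fin n × Fin n), gI W p d i)
      = ∑ U : Finset (Fin n), ∑ P : Finset (Fin n × Fin n), gI W p d (U, P) :=
        Fintype.sum_prod_type _
    _ ≤ ∑ U : Finset (Fin n), (d:ℝ) * (U.card:ℝ) * Real.exp (-(66:ℝ)*U.card*L) :=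
        Finset.sum_le_sum (fun U _ => inner_bound U)
    _ = ∑ u ∈ Finset.range (n+1), ∑ U ∈ Finset.univ.filter (fun U : Finset (Fin n) => U.card = u),
          (d:ℝ) * (U.card:ℝ) * Real.exp (-(66:ℝ)*U.card*L) := by
        refine (Finset.sum_fiberwise_of_maps_to (fun U _ => Finset.mem_range.2 ?_) _).symm
        exact Nat.lt_succ_of_le (by simpa using Finset.card_le_univ U)
    _ = ∑ u ∈ Finset.range (n+1),
          ((Finset.univ.filter (fun U : Finset (Fin n) => U.card = u)).card : ℝ)
            * ((d:ℝ) * (u:ℝ) * Real.exp (-(66:ℝ)*u*L)) := by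
        refine Finset.sum_congr rfl (fun u _ => ?_)
        rw [Finset.sum_congr rfl (fun U hU => by rw [(Finset.mem_filter.1 hU).2]),
          Finset.sum_const, nsmul_eq_mul]
    _ ≤ ∑ u ∈ Finset.range (n+1), (if u = 0 then 0 else Real.exp (-(63:ℝ)*L)) :=
        Finset.sum_le_sum houter
    _ ≤ (n:ℝ) * Real.exp (-(63:ℝ)*L) := by
        rw [Finset.sum_range_succ',
          Finset.sum_congr rfl (fun i _ => if_neg (Nat.succ_ne_zero i)), Finset.sum_const,
          Finset.card_range, nsmul_eq_mul]
        simp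
    _ ≤ ε / (n:ℝ)^2 := by
        rw [le_div_iff₀ (by positivity)]
        have hrw : (n:ℝ) * Real.exp (-(63:ℝ)*L) * (n:ℝ)^2 = Real.exp (-(60:ℝ)*L) := by
          rw [hnexp, pow_two, ← Real.exp_add, ← Real.exp_add, ← Real.exp_add]
          congr 1; ring
        rw [hrw]
        have h1 : Real.exp (-(60:ℝ)*L) ≤ Real.exp (-L) := Real.exp_le_exp.2 (by nlinarith)
        have h2 : Real.exp (-L) = 1 / (n:ℝ) := by
          rw [Real.exp_neg, hnexp, one_div]
        have h3 : (1:ℝ)/(n:ℝ) ≤ ε := by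
          rw [div_le_iff₀ hnpos]
          have hh := mul_le_mul_of_nonneg_left hεn (le_of_lt hε)
          rw [mul_one_div, div_self (ne_of_gt hε)] at hh
          linarith
        linarith
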